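/- arXiv:1611.09017 — 5 statements merged into one kernel-verified Lean document; each statement's English description precedes it below -/
import Mathlib

section
/- For every binary word w there exists a unique 1-prefix normal word w' with |w'| = |w| such that F₁(w', k) = F₁(w, k) for all 0 ≤ k ≤ |w|. -/
/-- Number of 1s in the length-`k` prefix of `w`. -/
def P1 (w : List Bool) (k : ℕ) : ℕ := (w.take k).count true

/-- Maximum number of 1s in a factor (contiguous substring) of `w` of length `k`. -/
def F1 (w : List Bool) (k : ℕ) : ℕ :=
  (Finset.range (w.length - k + 1)).sup fun i => ((w.drop i).take k).count true

/-- `w` is 1-prefix normal: `P₁(w,k) = F₁(w,k)` for all `k ≤ |w|`. -/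
def IsPrefixNormal1 (w : List Bool) : Prop :=
  ∀ k ≤ w.length, P1 w k = F1 w k

/-!
The function `k ↦ F₁(w, k)` vanishes at `0`, is monotone, grows by at most one per step and is
subadditive. Any function `g` with the first three properties is the prefix-count function `P₁` of
the word whose `i`-th letter is `1` exactly when `g` increases at `i`; subadditivity bounds every
factor count of that word by `g`, so the word is prefix normal with `F₁ = g`. Uniqueness holds
because a word is determined by its prefix counts, and a prefix normal word has `P₁ = F₁`.
-/

namespace List

lemma count_take_drop_add {α : Type*} [BEq α] (w : List α) (x : α) (i a b : ℕ) :
    ((w.drop i).take (a + b)).count x =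
      ((w.drop i).take a).count x + ((w.drop (i + a)).take b).count x := by
  rw [take_add, count_append, drop_drop]

lemma take_drop_sublist_take_drop {α : Type*} (w : List α) {i j k k' : ℕ} (hji : j ≤ i)
    (hk : i + k ≤ j + k') : ((w.drop i).take k).Sublist ((w.drop j).take k') := by
  have hwin : (w.drop i).take k = (((w.drop j).take k').drop (i - j)).take k := by
    rw [drop_take, drop_drop, take_take, Nat.add_sub_cancel' hji]
    congr 1
    omega
  rw [hwin]
  exact (take_sublist _ _).trans (drop_sublist _ _)

end List

open List

lemma P1_add (w : List Bool) (a b : ℕ) :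
    P1 w (a + b) = P1 w a + ((w.drop a).take b).count true := by
  simpa [P1] using count_take_drop_add w true 0 a b

lemma P1_succ (w : List Bool) {k : ℕ} (hk : k < w.length) :
    P1 w (k + 1) = P1 w k + w[k].toNat := by
  rw [P1, P1, ← take_concat_get' w k hk, count_append, count_singleton]
  cases w[k] <;> rfl

lemma eq_of_P1_eq {v u : List Bool} (hlen : v.length = u.length)
    (hP : ∀ k ≤ v.length, P1 v k = P1 u k) : v = u := by
  refine ext_getElem hlen fun k hkv hku => ?_
  have hstep := hP (k + 1) hkv
  rw [P1_succ v hkv, P1_succ u hku, hP k hkv.le] at hstep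
  cases hv : v[k] <;> cases hu : u[k] <;> simp_all

lemma le_F1 (w : List Bool) {i k : ℕ} (h : i ≤ w.length - k) :
    ((w.drop i).take k).count true ≤ F1 w k :=
  Finset.le_sup (f := fun i => ((w.drop i).take k).count true)
    (Finset.mem_range.mpr (by omega : i < w.length - k + 1))

lemma F1_le (w : List Bool) {k m : ℕ}
    (h : ∀ i ≤ w.length - k, ((w.drop i).take k).count true ≤ m) : F1 w k ≤ m :=
  Finset.sup_le fun i hi => h i (by rw [Finset.mem_range] at hi; omega)

lemma P1_le_F1 (w : List Bool) (k : ℕ) : P1 w k ≤ F1 w k := by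
  simpa [P1] using le_F1 w (i := 0) (Nat.zero_le _)

lemma F1_zero (w : List Bool) : F1 w 0 = 0 :=
  Nat.eq_zero_of_le_zero (F1_le w fun _ _ => by simp)

lemma F1_one_le (w : List Bool) : F1 w 1 ≤ 1 :=
  F1_le w fun _ _ => count_le_length.trans (length_take_le _ _)

lemma F1_add_le (w : List Bool) {a b : ℕ} (h : a + b ≤ w.length) :
    F1 w (a + b) ≤ F1 w a + F1 w b :=
  F1_le w fun i hi => by
    rw [count_take_drop_add]
    exact add_le_add (le_F1 w (by omega)) (le_F1 w (by omega))

lemma F1_succ_le (w : List Bool) {k : ℕ} (h : k + 1 ≤ w.length) : F1 w (k + 1) ≤ F1 w k + 1 :=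
  (F1_add_le w h).trans (Nat.add_le_add_left (F1_one_le w) _)

lemma F1_le_F1_succ (w : List Bool) {k : ℕ} (h : k + 1 ≤ w.length) : F1 w k ≤ F1 w (k + 1) :=
  F1_le w fun i hi =>
    -- a factor touching the end of `w` lies inside the factor of length `k + 1` ending there
    ((take_drop_sublist_take_drop w (min_le_left i (w.length - (k + 1))) (by omega)).count_le
      true).trans (le_F1 w (by omega))

def ofIncrements (g : ℕ → ℕ) (n : ℕ) : List Bool :=
  (range n).map fun i => decide (g i < g (i + 1))

section ofIncrements

variable {g : ℕ → ℕ} {n : ℕ}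

@[simp]
lemma length_ofIncrements : (ofIncrements g n).length = n := by
  simp [ofIncrements]

lemma P1_ofIncrements (hg0 : g 0 = 0) (hmono : ∀ k < n, g k ≤ g (k + 1))
    (hstep : ∀ k < n, g (k + 1) ≤ g k + 1) : ∀ k ≤ n, P1 (ofIncrements g n) k = g k := by
  intro k hk
  induction k with
  | zero => simp [P1, hg0]
  | succ k ih =>
    rw [P1_succ _ (by simpa using hk), ih (by omega)]
    simp only [ofIncrements, getElem_map, getElem_range]
    have hle := hmono k hk
    have hle_succ := hstep k hk
    by_cases hinc : g k < g (k + 1) <;> simp [hinc] <;> omega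

lemma F1_ofIncrements (hg0 : g 0 = 0) (hmono : ∀ k < n, g k ≤ g (k + 1))
    (hstep : ∀ k < n, g (k + 1) ≤ g k + 1) (hsub : ∀ a b, a + b ≤ n → g (a + b) ≤ g a + g b) :
    ∀ k ≤ n, F1 (ofIncrements g n) k = g k := by
  have hP := P1_ofIncrements hg0 hmono hstep
  intro k hk
  refine le_antisymm (F1_le _ fun i hi => ?_) ?_
  · have hsplit := P1_add (ofIncrements g n) i k
    rw [length_ofIncrements] at hi
    rw [hP _ (by omega), hP i (by omega)] at hsplit
    have hsub_ik := hsub i k (by omega)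
    omega
  · rw [← hP k hk]
    exact P1_le_F1 _ k

end ofIncrements

theorem stmt_1 (w : List Bool) :
    ∃! w' : List Bool, w'.length = w.length ∧ IsPrefixNormal1 w' ∧
      ∀ k ≤ w.length, F1 w' k = F1 w k := by
  have hmono : ∀ k < w.length, F1 w k ≤ F1 w (k + 1) := fun k hk => F1_le_F1_succ w hk
  have hstep : ∀ k < w.length, F1 w (k + 1) ≤ F1 w k + 1 := fun k hk => F1_succ_le w hk
  have hP := P1_ofIncrements (F1_zero w) hmono hstep
  have hF := F1_ofIncrements (F1_zero w) hmono hstep fun a b h => F1_add_le w h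
  refine ⟨ofIncrements (F1 w) w.length, ⟨length_ofIncrements, fun k hk => ?_, hF⟩, ?_⟩
  · rw [length_ofIncrements] at hk
    rw [hP k hk, hF k hk]
  · rintro v ⟨hlen, hnormal, hvF⟩
    refine eq_of_P1_eq (by simp [hlen]) fun k hk => ?_
    rw [hnormal k hk, hvF k (hlen ▸ hk), hP k (hlen ▸ hk)]
end

section
/- Two binary words w and w' of the same length have the same Parikh set (the set of Parikh vectors of their factors) if and only if F₁(w) = F₁(w') and F₀(w) = F₀(w') (i.e. they have the same prefix normal forms with respect to 1 and 0). -/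
/-- Maximum number of 0s in a factor of `w` of length `k`. -/
def F0 (w : List Bool) (k : ℕ) : ℕ :=
  (Finset.range (w.length - k + 1)).sup fun i => ((w.drop i).take k).count false

/-- The Parikh set of `w`: Parikh vectors `(|v|₀, |v|₁)` of all factors `v` of `w`. -/
def ParikhSet (w : List Bool) : Set (ℕ × ℕ) :=
  {q | ∃ v : List Bool, v <:+: w ∧ q = (v.count false, v.count true)}

/-- Generalized max-count function. -/
def Fb (w : List Bool) (b : Bool) (k : ℕ) : ℕ :=
  (Finset.range (w.length - k + 1)).sup fun i => ((w.drop i).take k).count b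

lemma F1_eq_Fb (w : List Bool) (k : ℕ) : F1 w k = Fb w true k := rfl
lemma F0_eq_Fb (w : List Bool) (k : ℕ) : F0 w k = Fb w false k := rfl

lemma window_infix (w : List Bool) (i k : ℕ) : (w.drop i).take k <:+: w :=
  ((w.drop i).take_prefix k).isInfix.trans (w.drop_suffix i).isInfix

lemma window_length (w : List Bool) {i k : ℕ} (hk : k ≤ w.length) (hi : i ≤ w.length - k) :
    ((w.drop i).take k).length = k := by
  simp only [List.length_take, List.length_drop]
  omega

/-- A factor's count is at most `Fb` at its length. -/
lemma count_le_Fb {v w : List Bool} (h : v <:+: w) (b : Bool) :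
    v.count b ≤ Fb w b v.length := by
  obtain ⟨s, t, hst⟩ := h
  have hwl : w.length = s.length + v.length + t.length := by
    rw [← hst]; simp [List.length_append]; omega
  have hv : (w.drop s.length).take v.length = v := by
    rw [← hst, List.append_assoc, List.drop_left, List.take_left]
  have hmem : s.length ∈ Finset.range (w.length - v.length + 1) := by
    simp only [Finset.mem_range]; omega
  calc v.count b = ((w.drop s.length).take v.length).count b := by rw [hv]
    _ ≤ Fb w b v.length :=
      Finset.le_sup (f := fun i => ((w.drop i).take v.length).count b) hmem

/-- `Fb` is attained by a window of length exactly `k` (when `k ≤ |w|`). -/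
lemma exists_window_Fb (w : List Bool) (b : Bool) {k : ℕ} (hk : k ≤ w.length) :
    ∃ i ≤ w.length - k, ((w.drop i).take k).count b = Fb w b k := by
  obtain ⟨i, hi, hi'⟩ := Finset.exists_mem_eq_sup (Finset.range (w.length - k + 1))
    ⟨0, by simp⟩ (fun i => ((w.drop i).take k).count b)
  exact ⟨i, by simpa using Nat.lt_succ_iff.mp (Finset.mem_range.mp hi), hi'.symm⟩

lemma step_bound (w : List Bool) (k i : ℕ) (b : Bool) :
    ((w.drop (i+1)).take k).count b ≤ ((w.drop i).take k).count b + 1 ∧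
    ((w.drop i).take k).count b ≤ ((w.drop (i+1)).take k).count b + 1 := by
  by_cases hi : i < w.length
  · rw [List.drop_eq_getElem_cons hi]
    cases k with
    | zero => simp
    | succ m =>
      rw [List.take_succ, List.count_append, List.take_succ_cons, List.count_cons]
      have h1 : ((w.drop (i+1))[m]?.toList).count b ≤ 1 := by
        cases h : (w.drop (i+1))[m]? with
        | none => simp
        | some a => cases a <;> cases b <;> simp [List.count_cons]
      have h2 : (if w[i] == b then 1 else 0) ≤ 1 := by split <;> omega
      omega
  · have h1 : w.drop i = [] := List.drop_eq_nil_of_le (by omega)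
    have h2 : w.drop (i+1) = [] := List.drop_eq_nil_of_le (by omega)
    simp [h1, h2]

/-- Discrete IVT, increasing form. -/
lemma ivt_up (f : ℕ → ℕ) (hstep : ∀ n, f (n+1) ≤ f n + 1) (c : ℕ) :
    ∀ n a, f a ≤ c → c ≤ f (a + n) → ∃ i, a ≤ i ∧ i ≤ a + n ∧ f i = c := by
  intro n
  induction n with
  | zero => intro a h1 h2; exact ⟨a, le_refl _, by omega, by simp at h2; omega⟩
  | succ n ih =>
    intro a h1 h2
    by_cases hc : c ≤ f (a + n)
    · obtain ⟨i, hi1, hi2, hi3⟩ := ih a h1 hc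
      exact ⟨i, hi1, by omega, hi3⟩
    · have hs := hstep (a + n)
      have h2' : c ≤ f (a + n + 1) := h2
      refine ⟨a + n + 1, by omega, ?_, by omega⟩
      show a + n + 1 ≤ a + (n + 1); omega

/-- Discrete IVT, decreasing form. -/
lemma ivt_down (f : ℕ → ℕ) (hstep : ∀ n, f n ≤ f (n+1) + 1) (c : ℕ) :
    ∀ n a, c ≤ f a → f (a + n) ≤ c → ∃ i, a ≤ i ∧ i ≤ a + n ∧ f i = c := by
  intro n
  induction n with
  | zero => intro a h1 h2; exact ⟨a, le_refl _, by omega, by simp at h2; omega⟩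
  | succ n ih =>
    intro n' h1 h2
    by_cases hc : f (n' + n) ≤ c
    · obtain ⟨i, hi1, hi2, hi3⟩ := ih n' h1 hc
      exact ⟨i, hi1, by omega, hi3⟩
    · have hs := hstep (n' + n)
      have h2' : f (n' + n + 1) ≤ c := h2
      refine ⟨n' + n + 1, by omega, ?_, by omega⟩
      show n' + n + 1 ≤ n' + (n + 1); omega

/-- Membership in the Parikh set implies the F-bounds. -/
lemma parikh_bounds {w : List Bool} {z o : ℕ} (h : (z, o) ∈ ParikhSet w) :
    z + o ≤ w.length ∧ o ≤ Fb w true (z + o) ∧ z ≤ Fb w false (z + o) := by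
  obtain ⟨v, hinf, hq⟩ := h
  obtain ⟨hz, ho⟩ : z = v.count false ∧ o = v.count true := by
    simpa [Prod.ext_iff] using hq
  have hlv : z + o = v.length := by
    rw [hz, ho]; exact List.count_false_add_count_true v
  have hle : v.length ≤ w.length := hinf.length_le
  refine ⟨by omega, ?_, ?_⟩
  · rw [hlv, ho]; exact count_le_Fb hinf true
  · rw [hlv, hz]; exact count_le_Fb hinf false

/-- The F-bounds imply membership in the Parikh set. -/
lemma parikh_of_bounds {w : List Bool} {z o : ℕ} (hk : z + o ≤ w.length)
    (h1 : o ≤ Fb w true (z + o)) (h0 : z ≤ Fb w false (z + o)) :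
    (z, o) ∈ ParikhSet w := by
  set k := z + o with hkdef
  set f : ℕ → ℕ := fun i => ((w.drop i).take k).count true with hf
  obtain ⟨a, ha, ha'⟩ := exists_window_Fb w false hk
  obtain ⟨b, hb, hb'⟩ := exists_window_Fb w true hk
  have hla : ((w.drop a).take k).length = k := window_length w hk ha
  have hfa : f a ≤ o := by
    have := List.count_false_add_count_true ((w.drop a).take k)
    simp only [hf]
    omega
  have hfb : o ≤ f b := by rw [hf]; simp only; omega
  have hstep1 : ∀ n, f (n+1) ≤ f n + 1 := fun n => (step_bound w k n true).1
  have hstep2 : ∀ n, f n ≤ f (n+1) + 1 := fun n => (step_bound w k n true).2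
  have key : ∃ i, i ≤ w.length - k ∧ f i = o := by
    rcases le_total a b with hab | hab
    · obtain ⟨i, hi1, hi2, hi3⟩ := ivt_up f hstep1 o (b - a) a hfa (by
        rw [Nat.add_sub_cancel' hab]; exact hfb)
      exact ⟨i, by omega, hi3⟩
    · obtain ⟨i, hi1, hi2, hi3⟩ := ivt_down f hstep2 o (a - b) b hfb (by
        rw [Nat.add_sub_cancel' hab]; exact hfa)
      exact ⟨i, by omega, hi3⟩
  obtain ⟨i, hi, hio⟩ := key
  refine ⟨(w.drop i).take k, window_infix w i k, ?_⟩
  have hli : ((w.drop i).take k).length = k := window_length w hk hi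
  have hsum := List.count_false_add_count_true ((w.drop i).take k)
  have hcz : ((w.drop i).take k).count false = z := by
    have : ((w.drop i).take k).count true = o := hio
    omega
  exact Prod.ext hcz.symm hio.symm

theorem stmt_6 (w w' : List Bool) (hlen : w.length = w'.length) :
    ParikhSet w = ParikhSet w' ↔
      ((∀ k ≤ w.length, F1 w k = F1 w' k) ∧ (∀ k ≤ w.length, F0 w k = F0 w' k)) := by
  have Fb_le : ∀ (u u' : List Bool) (b : Bool) (k : ℕ), u.length = u'.length →
      ParikhSet u ⊆ ParikhSet u' → k ≤ u.length → Fb u b k ≤ Fb u' b k := by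
    intro u u' b k hl hsub hk
    obtain ⟨i, hi, hi'⟩ := exists_window_Fb u b hk
    set v := (u.drop i).take k with hv
    have hvlen : v.length = k := window_length u hk hi
    have hmem : (v.count false, v.count true) ∈ ParikhSet u' :=
      hsub ⟨v, window_infix u i k, rfl⟩
    have hb := parikh_bounds hmem
    have hsum := List.count_false_add_count_true v
    rw [hvlen] at hsum
    cases b with
    | false =>
      calc Fb u false k = v.count false := hi'.symm
        _ ≤ Fb u' false (v.count false + v.count true) := hb.2.2
        _ = Fb u' false k := by rw [hsum]
    | true =>
      calc Fb u true k = v.count true := hi'.symm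
        _ ≤ Fb u' true (v.count false + v.count true) := hb.2.1
        _ = Fb u' true k := by rw [hsum]
  constructor
  · intro hP
    constructor
    · intro k hk
      rw [F1_eq_Fb, F1_eq_Fb]
      exact le_antisymm (Fb_le w w' true k hlen hP.subset hk)
        (Fb_le w' w true k hlen.symm hP.symm.subset (hlen ▸ hk))
    · intro k hk
      rw [F0_eq_Fb, F0_eq_Fb]
      exact le_antisymm (Fb_le w w' false k hlen hP.subset hk)
        (Fb_le w' w false k hlen.symm hP.symm.subset (hlen ▸ hk))
  · rintro ⟨h1, h0⟩
    ext ⟨z, o⟩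
    constructor
    · intro hm
      obtain ⟨hk, ht, hf⟩ := parikh_bounds hm
      refine parikh_of_bounds (by omega) ?_ ?_
      · rw [← F1_eq_Fb, ← h1 (z + o) hk, F1_eq_Fb]; exact ht
      · rw [← F0_eq_Fb, ← h0 (z + o) hk, F0_eq_Fb]; exact hf
    · intro hm
      obtain ⟨hk, ht, hf⟩ := parikh_bounds hm
      rw [← hlen] at hk
      refine parikh_of_bounds hk ?_ ?_
      · rw [← F1_eq_Fb, h1 (z + o) hk, F1_eq_Fb]; exact ht
      · rw [← F0_eq_Fb, h0 (z + o) hk, F0_eq_Fb]; exact hf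
end

section
/- A Parikh vector q = (x, y) with x + y ≤ |w| occurs as the Parikh vector of a factor of the binary word w if and only if f₁(w, x + y) ≤ y ≤ F₁(w, x + y), where y counts the 1s. -/
/-- Minimum number of 1s in a factor of `w` of length `k`. -/
noncomputable def f1 (w : List Bool) (k : ℕ) : ℕ :=
  sInf {m : ℕ | ∃ v : List Bool, v <:+: w ∧ v.length = k ∧ v.count true = m}

theorem exists_apply_eq_of_le_add_one {f : ℕ → ℤ} (hf : ∀ n, f (n + 1) ≤ f n + 1) {i j : ℕ}
    {y : ℤ} (hij : i ≤ j) (hi : f i ≤ y) (hj : y ≤ f j) : ∃ m ∈ Set.Icc i j, f m = y := by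
  induction j, hij using Nat.le_induction with
  | base => exact ⟨i, Set.left_mem_Icc.mpr le_rfl, le_antisymm hi hj⟩
  | succ j hij ih =>
    by_cases hy : y ≤ f j
    · obtain ⟨m, ⟨him, hmj⟩, hm⟩ := ih hy
      exact ⟨m, ⟨him, hmj.trans j.le_succ⟩, hm⟩
    · exact ⟨j + 1, ⟨by omega, le_rfl⟩, by have := hf j; omega⟩

theorem exists_apply_eq_of_abs_sub_le_one {f : ℕ → ℤ} (hf : ∀ n, |f (n + 1) - f n| ≤ 1)
    {i j : ℕ} {y : ℤ} (hy : y ∈ Set.uIcc (f i) (f j)) : ∃ m ∈ Set.uIcc i j, f m = y := by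
  wlog hij : i ≤ j generalizing i j
  · rw [Set.uIcc_comm] at hy ⊢
    exact this hy (by omega)
  rw [Set.uIcc_of_le hij]
  rcases le_total (f i) (f j) with hfij | hfji
  · rw [Set.uIcc_of_le hfij] at hy
    exact exists_apply_eq_of_le_add_one (fun n => by have := (abs_le.mp (hf n)).2; omega) hij hy.1 hy.2
  · rw [Set.uIcc_of_ge hfji] at hy
    obtain ⟨m, hm, hfm⟩ := exists_apply_eq_of_le_add_one (f := fun n => -f n)
      (fun n => by have := (abs_le.mp (hf n)).1; omega) hij (neg_le_neg hy.2) (neg_le_neg hy.1)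
    exact ⟨m, hm, neg_inj.mp hfm⟩

namespace List

variable {α : Type*}

theorem drop_take_infix (l : List α) (i k : ℕ) : (l.drop i).take k <:+: l :=
  ((l.drop i).take_prefix k).isInfix.trans (l.drop_suffix i).isInfix

theorem exists_drop_take_eq_of_infix {l₁ l₂ : List α} (h : l₁ <:+: l₂) :
    ∃ i, i + l₁.length ≤ l₂.length ∧ (l₂.drop i).take l₁.length = l₁ := by
  obtain ⟨s, t, rfl⟩ := h
  exact ⟨s.length, by simp, by rw [append_assoc, drop_left, take_left]⟩

theorem count_take_succ_le [BEq α] (l : List α) (a : α) (j : ℕ) :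
    (l.take j).count a ≤ (l.take (j + 1)).count a ∧
      (l.take (j + 1)).count a ≤ (l.take j).count a + 1 := by
  rw [take_add, count_append]
  have : ((l.drop j).take 1).count a ≤ 1 := count_le_length.trans (by simp)
  omega

theorem abs_count_drop_succ_take_sub_le_one [BEq α] (l : List α) (a : α) (i k : ℕ) :
    |(((l.drop (i + 1)).take k).count a : ℤ) - ((l.drop i).take k).count a| ≤ 1 := by
  have hsplit (j : ℕ) : (l.take (j + k)).count a = (l.take j).count a + ((l.drop j).take k).count a := by
    rw [take_add, count_append]
  have h₀ := hsplit i
  have h₁ := hsplit (i + 1)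
  rw [Nat.add_right_comm] at h₁
  have s₀ := count_take_succ_le l a i
  have s₁ := count_take_succ_le l a (i + k)
  rw [abs_le]
  omega

end List

theorem f1_le_count_true {v w : List Bool} (hv : v <:+: w) : f1 w v.length ≤ v.count true :=
  Nat.sInf_le ⟨v, hv, rfl, rfl⟩

theorem count_true_le_F1 {v w : List Bool} (hv : v <:+: w) : v.count true ≤ F1 w v.length := by
  obtain ⟨i, hi, hvi⟩ := List.exists_drop_take_eq_of_infix hv
  calc v.count true = ((w.drop i).take v.length).count true := by rw [hvi]
    _ ≤ F1 w v.length :=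
      Finset.le_sup (f := fun i => ((w.drop i).take v.length).count true)
        (Finset.mem_range.mpr (by omega))

theorem exists_count_true_eq_f1 {w : List Bool} {k : ℕ} (hk : k ≤ w.length) :
    ∃ i, i + k ≤ w.length ∧ ((w.drop i).take k).count true = f1 w k := by
  have hne : {m | ∃ v : List Bool, v <:+: w ∧ v.length = k ∧ v.count true = m}.Nonempty :=
    ⟨_, w.take k, (w.take_prefix k).isInfix, by simp [hk], rfl⟩
  obtain ⟨v, hv, rfl, hvc⟩ := Nat.sInf_mem hne
  obtain ⟨i, hi, hvi⟩ := List.exists_drop_take_eq_of_infix hv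
  exact ⟨i, hi, by rw [hvi, hvc]; rfl⟩

theorem exists_count_true_eq_F1 {w : List Bool} {k : ℕ} (hk : k ≤ w.length) :
    ∃ i, i + k ≤ w.length ∧ ((w.drop i).take k).count true = F1 w k := by
  obtain ⟨i, hi, hF⟩ := Finset.exists_mem_eq_sup _ Finset.nonempty_range_add_one
    fun i => ((w.drop i).take k).count true
  exact ⟨i, by rw [Finset.mem_range] at hi; omega, hF.symm⟩

theorem exists_infix_count_true_eq {w : List Bool} {k y : ℕ} (hk : k ≤ w.length)
    (hlo : f1 w k ≤ y) (hhi : y ≤ F1 w k) :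
    ∃ v : List Bool, v <:+: w ∧ v.length = k ∧ v.count true = y := by
  obtain ⟨i₀, hi₀, h₀⟩ := exists_count_true_eq_f1 hk
  obtain ⟨i₁, hi₁, h₁⟩ := exists_count_true_eq_F1 hk
  obtain ⟨m, hm, hmy⟩ := exists_apply_eq_of_abs_sub_le_one
    (f := fun i => (((w.drop i).take k).count true : ℤ))
    (fun i => List.abs_count_drop_succ_take_sub_le_one w true i k) (i := i₀) (j := i₁) (y := y)
    (Set.mem_uIcc_of_le (by simp only [h₀]; exact_mod_cast hlo)
      (by simp only [h₁]; exact_mod_cast hhi))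
  refine ⟨_, List.drop_take_infix w m k, ?_, by exact_mod_cast hmy⟩
  rw [List.length_take, List.length_drop]
  rcases Set.mem_uIcc.mp hm with hm | hm <;> omega

theorem stmt_7 (w : List Bool) (x y : ℕ) (h : x + y ≤ w.length) :
    (∃ v : List Bool, v <:+: w ∧ v.count false = x ∧ v.count true = y) ↔
      (f1 w (x + y) ≤ y ∧ y ≤ F1 w (x + y)) := by
  constructor
  · rintro ⟨v, hv, rfl, rfl⟩
    rw [List.count_false_add_count_true]
    exact ⟨f1_le_count_true hv, count_true_le_F1 hv⟩
  · rintro ⟨hlo, hhi⟩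
    obtain ⟨v, hv, hlen, hvy⟩ := exists_infix_count_true_eq h hlo hhi
    refine ⟨v, hv, ?_, hvy⟩
    have := v.count_false_add_count_true
    omega
end

section
/- Let w be a 0-prefix normal binary word containing at least one 0 (under the order 0 < 1). Then the word w · 1^{|w|} is a Lyndon word. -/
/-- `w` is 0-prefix normal: no factor of `w` has more 0s than the prefix of the same length. -/
def IsPrefixNormal0 (w : List Bool) : Prop :=
  ∀ v : List Bool, v <:+: w → v.count false ≤ (w.take v.length).count false

/-- A Lyndon word: nonempty and lexicographically strictly smaller than each of its
proper nonempty suffixes (with `false < true`). -/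
def IsLyndon (w : List Bool) : Prop :=
  w ≠ [] ∧ ∀ u v : List Bool, w = u ++ v → u ≠ [] → v ≠ [] → w < v

/-!
Write `W = w ++ 1^n`. Prefix normality forces `w` to start with `0`, so `W` is below every suffix
`1^k`. For a suffix `a ++ 1^n` with `w = u ++ a`, `u ≠ []`, suppose it were `≤ W`. If it is a
prefix of `W`, then `w = a ++ 1^|u|`, so `u` has no `0` although it starts with `0`. Otherwise the
two words first differ where the suffix has `0` and `W` has `1`, and both positions lie inside
`w`: a factor `c0` of `w` has more `0`s than its prefix `c1` of the same length.
-/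

open List

lemma List.prefix_or_exists_false_true_of_lt {a b : List Bool} (h : a < b) :
    a <+: b ∨ ∃ c x y, a = c ++ false :: x ∧ b = c ++ true :: y := by
  induction h with
  | nil => exact Or.inl nil_prefix
  | @rel p ps q qs hpq =>
      obtain ⟨rfl, rfl⟩ := Bool.lt_iff.mp hpq
      exact Or.inr ⟨[], ps, qs, rfl, rfl⟩
  | @cons p ps qs _ ih =>
      rcases ih with ⟨t, ht⟩ | ⟨c, x, y, rfl, rfl⟩
      · exact Or.inl ⟨t, by simp [ht]⟩
      · exact Or.inr ⟨p :: c, x, y, rfl, rfl⟩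

lemma List.prefix_of_prefix_append_replicate_true {c a : List Bool} {m : ℕ}
    (h : c ++ [false] <+: a ++ replicate m true) : c ++ [false] <+: a := by
  induction m with
  | zero => simpa using h
  | succ m ih =>
      rw [replicate_succ', ← append_assoc, prefix_concat_iff] at h
      rcases h with h | h
      · simpa using congrArg getLast? h
      · exact ih h

namespace IsPrefixNormal0

variable {w : List Bool}

theorem not_infix_of_prefix (hw : IsPrefixNormal0 w) {c : List Bool} (hc : c ++ [true] <+: w) :
    ¬ c ++ [false] <:+: w := fun hinf => by
  have htake : w.take (c ++ [false]).length = c ++ [true] := by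
    simpa using (prefix_iff_eq_take.mp hc).symm
  have h := hw _ hinf
  rw [htake] at h
  simp at h

theorem exists_eq_false_cons (hw : IsPrefixNormal0 w) (h0 : 0 < w.count false) :
    ∃ w', w = false :: w' := by
  obtain ⟨b, w', rfl⟩ :=
    exists_cons_of_ne_nil (ne_nil_of_length_pos (lt_of_lt_of_le h0 count_le_length))
  cases b
  · exact ⟨w', rfl⟩
  · refine (hw.not_infix_of_prefix (c := []) (by simp) ?_).elim
    exact (singleton_infix_iff _ _).mpr (count_pos_iff.mp h0)

theorem append_replicate_lt_append_replicate (hw : IsPrefixNormal0 w) (h0 : 0 < w.count false)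
    {u a : List Bool} (hwa : w = u ++ a) (hu : u ≠ []) {m : ℕ} (hm : u.length ≤ m) :
    w ++ replicate m true < a ++ replicate m true := by
  have hlen : a.length < w.length := by
    simpa [hwa] using length_pos_iff.mpr hu
  refine lt_of_le_of_ne' (not_lt.mp fun hlt => ?_) (fun heq => ?_)
  · rcases prefix_or_exists_false_true_of_lt hlt with hpre | ⟨c, x, y, hv, hW⟩
    · have hwpre : w <+: a ++ replicate m true :=
        prefix_of_prefix_length_le (prefix_append _ _) hpre (by simp [hwa]; omega)
      have hcount := hwpre.sublist.count_le false
      obtain ⟨w', hw'⟩ := hw.exists_eq_false_cons h0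
      obtain ⟨b, u', rfl⟩ := exists_cons_of_ne_nil hu
      obtain ⟨rfl, -⟩ : b = false ∧ _ := by simpa [hwa] using hw'
      simp [hwa, count_append, count_replicate] at hcount
    · have hca : c ++ [false] <+: a :=
        prefix_of_prefix_append_replicate_true (by rw [hv]; simp)
      have hcw : c ++ [true] <+: w :=
        prefix_of_prefix_length_le (by rw [hW]; simp) (prefix_append w _)
          (by have := hca.length_le; simp at this ⊢; omega)
      exact hw.not_infix_of_prefix hcw (hca.isInfix.trans (hwa ▸ (suffix_append u a).isInfix))
  · have := congrArg length heq
    simp at this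
    omega

end IsPrefixNormal0

theorem stmt_16 (w : List Bool) (hw : IsPrefixNormal0 w) (h0 : 0 < w.count false) :
    IsLyndon (w ++ List.replicate w.length true) := by
  obtain ⟨w', hw'⟩ := hw.exists_eq_false_cons h0
  refine ⟨by simp [hw'], fun u v huv hu hv => ?_⟩
  rcases append_eq_append_iff.mp huv.symm with ⟨a, hwa, rfl⟩ | ⟨c, -, hcv⟩
  · exact hw.append_replicate_lt_append_replicate h0 hwa hu (by simp [hwa])
  · obtain ⟨b, v', rfl⟩ := exists_cons_of_ne_nil hv
    obtain rfl : b = true := eq_of_mem_replicate (hcv ▸ by simp : b ∈ replicate w.length true)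
    rw [hw']
    exact Lex.rel (by decide)
end

section
/- Every 0-prefix normal binary word is a pre-necklace, i.e., a prefix of some power of a Lyndon word (under the order 0 < 1). -/
/-- appending anything to a strict lex inequality between equal-length words keeps it. -/
lemma lexAppend : ∀ {p v : List Bool}, List.Lex (·<·) p v → p.length = v.length →
    ∀ x y : List Bool, List.Lex (·<·) (p ++ x) (v ++ y) := by
  intro p v h
  induction h with
  | nil => intro hl; simp at hl
  | @rel a l1 b l2 hab => intro _ x y; exact List.Lex.rel hab
  | @cons a l1 l2 h ih =>
      intro hl x y
      exact List.Lex.cons (ih (by simpa using hl) x y)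

lemma lexPrepend (v : List Bool) {x y : List Bool} (h : List.Lex (·<·) x y) :
    List.Lex (·<·) (v ++ x) (v ++ y) := by
  induction v with
  | nil => exact h
  | cons a v ih => exact List.Lex.cons ih

lemma lt_ones : ∀ (x : List Bool), false ∈ x → ∀ m, x.length ≤ m → ∀ z : List Bool,
    List.Lex (·<·) (x ++ z) (List.replicate m true) := by
  intro x
  induction x with
  | nil => simp
  | cons a x ih =>
    intro hmem m hlen z
    match m with
    | 0 => simp at hlen
    | m + 1 =>
      rw [List.replicate_succ]
      cases a with
      | false => exact List.Lex.rel (by decide)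
      | true =>
        have hx : false ∈ x := by simpa using hmem
        exact List.Lex.cons (ih hx m (by simpa using hlen) z)

lemma count_of_lex : ∀ {v p : List Bool}, List.Lex (·<·) v p → v.length = p.length →
    ∃ j, j ≤ v.length ∧ (p.take j).count false < (v.take j).count false := by
  intro v p h
  induction h with
  | nil => intro hl; simp at hl
  | @rel a l1 b l2 hab =>
    intro _
    have ha : a = false ∧ b = true := by
      revert hab; cases a <;> cases b <;> decide
    obtain ⟨rfl, rfl⟩ := ha
    exact ⟨1, by simp, by simp⟩
  | @cons a l1 l2 h ih =>
    intro hl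
    obtain ⟨j, hj, hc⟩ := ih (by simpa using hl)
    refine ⟨j + 1, by simpa using hj, ?_⟩
    simp only [List.take_succ_cons, List.count_cons]
    cases a <;> simp <;> omega

/-- Main consequence of prefix normality: every suffix is lex-≥ the prefix of its length. -/
lemma prefix_le_suffix {w v : List Bool} (hw : IsPrefixNormal0 w) (hv : v <:+ w) :
    ¬ List.Lex (·<·) v (w.take v.length) := by
  intro h
  have hlen : v.length ≤ w.length := hv.length_le
  have hl : v.length = (w.take v.length).length := by simp [Nat.min_eq_left hlen]
  obtain ⟨j, hj, hc⟩ := count_of_lex h hl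
  have h1 : (w.take v.length).take j = w.take j := by
    rw [List.take_take]; congr 1; omega
  rw [h1] at hc
  have hinf : v.take j <:+: w := by
    obtain ⟨s, hs⟩ := hv
    obtain ⟨r, hr⟩ := (List.take_prefix j v)
    exact ⟨s, r, by rw [List.append_assoc, hr, hs]⟩
  have := hw (v.take j) hinf
  rw [List.length_take, Nat.min_eq_left hj] at this
  omega

/-- A word that is a suffix of itself followed by ones is all ones. -/
lemma allOnes (r : ℕ) (hr : 1 ≤ r) : ∀ n, ∀ p : List Bool, p.length ≤ n →
    p <:+ p ++ List.replicate r true → p = List.replicate p.length true := by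
  intro n
  induction n with
  | zero =>
    intro p hp _
    have : p = [] := List.length_eq_zero_iff.mp (by omega)
    simp [this]
  | succ n ih =>
    intro p hp hsuf
    have hdrop : p = (p ++ List.replicate r true).drop r := by
      have := List.suffix_iff_eq_drop.mp hsuf
      simpa using this
    by_cases hle : r ≤ p.length
    · have h2 : p = p.drop r ++ List.replicate r true := by
        conv_lhs => rw [hdrop]
        rw [List.drop_append, Nat.sub_eq_zero_of_le hle, List.drop_zero]
      have hq : p.drop r <:+ p.drop r ++ List.replicate r true := by
        rw [← h2]; exact List.drop_suffix r p
      have hqlen : (p.drop r).length ≤ n := by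
        rw [List.length_drop]; omega
      have hall := ih (p.drop r) hqlen hq
      calc p = p.drop r ++ List.replicate r true := h2
        _ = List.replicate (p.drop r).length true ++ List.replicate r true := by
            conv_lhs => rw [hall]
        _ = List.replicate ((p.drop r).length + r) true := by rw [List.replicate_add]
        _ = List.replicate p.length true := by
            congr 1
            simp only [List.length_drop]
            omega
    · have hlt : p.length < r := by omega
      rw [List.drop_append, List.drop_eq_nil_of_le (le_of_lt hlt),
        List.nil_append, List.drop_replicate] at hdrop
      have hl : r - (r - p.length) = p.length := by omega
      rw [hl] at hdrop
      exact hdrop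

lemma flatten_replicate_single (k : ℕ) :
    (List.replicate k [true]).flatten = List.replicate k true := by
  induction k with
  | zero => rfl
  | succ k ih => simp [List.replicate_succ, ih]

theorem stmt_17 (w : List Bool) (hw : IsPrefixNormal0 w) :
    ∃ (t : List Bool) (k : ℕ), IsLyndon t ∧ w <+: (List.replicate k t).flatten := by
  have lyn_one : IsLyndon [true] := by
    refine ⟨by simp, ?_⟩
    intro u v h hu hv
    have := congrArg List.length h
    simp at this
    have h1 : 1 ≤ u.length := List.length_pos_iff.mpr hu
    have h2 : 1 ≤ v.length := List.length_pos_iff.mpr hv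
    omega
  by_cases hmem : false ∈ w
  · -- w contains a false; then w starts with false
    obtain ⟨s, t0, hst⟩ := List.append_of_mem hmem
    have hinf : [false] <:+: w := ⟨s, t0, by simpa using hst.symm⟩
    have hcnt := hw [false] hinf
    simp at hcnt
    -- w starts with false
    obtain ⟨c, w', rfl⟩ : ∃ c w', w = c :: w' := by
      cases w with
      | nil => simp at hmem
      | cons c w' => exact ⟨c, w', rfl⟩
    have hc : c = false := by
      cases c
      · rfl
      · simp at hcnt
    subst hc
    set w : List Bool := false :: w' with hwdef
    set m : ℕ := w.length with hm
    set R : List Bool := List.replicate m true with hR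
    refine ⟨w ++ R, 1, ⟨by simp [hwdef], ?_⟩, by simp⟩
    intro u v h hu hv
    show List.Lex (·<·) (w ++ R) v
    have hvd : v = (w ++ R).drop u.length := by rw [h, List.drop_left]
    have hul : 1 ≤ u.length := List.length_pos_iff.mpr hu
    have hvl : 1 ≤ v.length := List.length_pos_iff.mpr hv
    have hlenh := congrArg List.length h
    simp only [List.length_append] at hlenh
    have hRl : R.length = m := by simp [hR]
    by_cases hcase : w.length ≤ u.length
    · -- v is a suffix of the block of ones
      have hvrep : v = List.replicate (m - (u.length - w.length)) true := by
        rw [hvd, List.drop_append, List.drop_eq_nil_of_le hcase,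
          List.nil_append, hR, List.drop_replicate]
      have hvlen : v.length = m - (u.length - w.length) := by rw [hvrep]; simp
      obtain ⟨nv, hnv⟩ : ∃ nv, m - (u.length - w.length) = nv + 1 :=
        ⟨m - (u.length - w.length) - 1, by omega⟩
      rw [hvrep, hnv, List.replicate_succ]
      show List.Lex (·<·) ((false :: w') ++ R) (true :: _)
      exact List.Lex.rel (by decide)
    · -- v = (suffix of w) ++ R
      push_neg at hcase
      set d : ℕ := u.length with hd
      have hvsplit : v = w.drop d ++ R := by
        rw [hvd, List.drop_append, Nat.sub_eq_zero_of_le (le_of_lt hcase),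
          List.drop_zero]
      set v₀ : List Bool := w.drop d with hv0
      have hv0len : v₀.length = w.length - d := by simp [hv0]
      have hv0ne : 1 ≤ v₀.length := by omega
      set ℓ : ℕ := v₀.length with hℓ
      set p : List Bool := w.take ℓ with hp
      have hple : p.length = ℓ := by simp [hp]; omega
      have hA : ¬ List.Lex (·<·) v₀ p := prefix_le_suffix hw (List.drop_suffix d w)
      have hle : p ≤ v₀ := le_of_not_gt (by exact hA)
      rcases lt_or_eq_of_le hle with hlt | heq
      · -- strict: p < v₀
        have hlex : List.Lex (·<·) p v₀ := hlt
        have : List.Lex (·<·) (p ++ (w.drop ℓ ++ R)) (v₀ ++ R) :=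
          lexAppend hlex (by omega) _ _
        rw [← List.append_assoc, List.take_append_drop] at this
        rwa [hvsplit]
      · -- p = v₀ : then compare the remainders
        have hwsplit : w ++ R = v₀ ++ (w.drop ℓ ++ R) := by
          rw [← heq, ← List.append_assoc, List.take_append_drop]
        rw [hwsplit, hvsplit]
        apply lexPrepend
        set w'' : List Bool := w.drop ℓ with hw''
        have hw''len : w''.length = w.length - ℓ := by simp [hw'']
        have hw''ne : 1 ≤ w''.length := by omega
        by_cases hmem'' : false ∈ w''
        · exact lt_ones w'' hmem'' m (by omega) R
        · -- w'' is all ones: contradiction with border lemma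
          exfalso
          have hw''rep : w'' = List.replicate w''.length true := by
            rw [List.eq_replicate_iff]
            refine ⟨rfl, fun b hb => ?_⟩
            cases b
            · exact absurd hb hmem''
            · rfl
          have hwps : w = p ++ List.replicate w''.length true := by
            rw [← hw''rep, hp, hw'', List.take_append_drop]
          have hpsuf : p <:+ p ++ List.replicate w''.length true := by
            rw [← hwps, heq]
            exact List.drop_suffix d w
          have hpall := allOnes w''.length hw''ne p.length p le_rfl hpsuf
          -- but p starts with false
          obtain ⟨nℓ, hnℓ⟩ : ∃ nℓ, ℓ = nℓ + 1 := ⟨ℓ - 1, by omega⟩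
          have : p = false :: w'.take nℓ := by
            rw [hp, hwdef, hnℓ, List.take_succ_cons]
          rw [this] at hpall
          simp [List.replicate_succ] at hpall
  · -- w is all ones
    have hrep : w = List.replicate w.length true := by
      rw [List.eq_replicate_iff]
      refine ⟨rfl, fun b hb => ?_⟩
      cases b
      · exact absurd hb hmem
      · rfl
    exact ⟨[true], w.length, lyn_one, by rw [flatten_replicate_single, ← hrep]⟩
end
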